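/- Let $a<b$, $k>0$, $0<\lambda\le\pi/2$, $n\in\mathbb{N}$, and $\epsilon\in J_n=[\,k((b-a)/((n+1)\pi-\lambda))^2,\; k((b-a)/(n\pi+\lambda))^2\,]$. Then the solution $y_\epsilon(t)=\dfrac{-e^a\cos[\sqrt{k/\epsilon}\,(b-t)]+e^b\cos[\sqrt{k/\epsilon}\,(t-a)]}{\sqrt{k/\epsilon}\,(k+\epsilon)\,\sin[\sqrt{k/\epsilon}\,(b-a)]}+\dfrac{e^t}{k+\epsilon}$ of the Neumann problem $\epsilon y''+ky=e^t$, $y'(a)=y'(b)=0$ satisfies for all $t\in[a,b]$: $\left|y_\epsilon(t)-\dfrac{e^t}{k+\epsilon}\right|\le\dfrac{e^a+e^b}{(k+\epsilon)\sin\lambda}\sqrt{\epsilon/k}$; in particular, for $\epsilon_n\in J_n$ the solutions $y_{\epsilon_n}$ converge uniformly on $[a,b]$ to $u(t)=e^t/k$ as $n\to\infty$. -/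

import Mathlib

/-!
Subtracting the particular solution `eᵗ/(k+ε)` from `y_ε` leaves a quotient whose numerator is
at most `eᵃ + eᵇ` in absolute value and whose denominator is `ω (k+ε) sin(ω(b-a))` with
`ω = √(k/ε)`. For `ε ∈ Jₙ` the phase `ω(b-a)` lies in `[nπ+λ, (n+1)π-λ]`, where `|sin| ≥ sin λ`,
and `1/ω = √(ε/k)`; this is the pointwise bound. The right endpoints of `Jₙ` tend to `0`, so
`εₙ → 0`, and both this bound and `|eᵗ/(k+εₙ) - eᵗ/k| ≤ eᵇ εₙ/k²` tend to `0` uniformly on `[a,b]`.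
-/

open Real Set

/-- The explicit solution of the Neumann problem `ε y'' + k y = eᵗ`,
`y'(a) = y'(b) = 0`:
`y_ε(t) = (-eᵃ cos(√(k/ε)(b-t)) + eᵇ cos(√(k/ε)(t-a))) / (√(k/ε)(k+ε) sin(√(k/ε)(b-a)))
          + eᵗ/(k+ε)`. -/
noncomputable def yExp (a b k ε : ℝ) (t : ℝ) : ℝ :=
  (-Real.exp a * Real.cos (Real.sqrt (k / ε) * (b - t)) +
      Real.exp b * Real.cos (Real.sqrt (k / ε) * (t - a))) /
    (Real.sqrt (k / ε) * (k + ε) * Real.sin (Real.sqrt (k / ε) * (b - a))) +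
  Real.exp t / (k + ε)

open Filter Topology

lemma tendstoUniformlyOn_of_dist_le {ι α β : Type*} [PseudoMetricSpace β] {l : Filter ι}
    {F : ι → α → β} {f : α → β} {s : Set α} {g : ι → ℝ} (hg : Tendsto g l (𝓝 0))
    (hF : ∀ i, ∀ x ∈ s, dist (f x) (F i x) ≤ g i) : TendstoUniformlyOn F f l s := by
  rw [Metric.tendstoUniformlyOn_iff]
  intro δ hδ
  filter_upwards [hg.eventually (gt_mem_nhds hδ)] with i hi x hx
  exact (hF i x hx).trans_lt hi

lemma sin_le_abs_sin_of_mem_Icc {lam x : ℝ} (n : ℤ) (hlam : 0 ≤ lam)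
    (hx : x ∈ Icc (n * π + lam) ((n + 1) * π - lam)) : sin lam ≤ |sin x| := by
  obtain ⟨hlo, hhi⟩ := hx
  set y := x - n * π
  have hsin : |sin x| = |sin y| := by
    rw [show x = y + n * π by ring, sin_add_int_mul_pi, abs_mul, abs_neg_one_zpow, one_mul]
  rw [hsin]
  refine le_trans ?_ (le_abs_self _)
  rcases le_total y (π / 2) with hy | hy
  · exact sin_le_sin_of_le_of_le_pi_div_two (by linarith [pi_pos]) hy (by linarith)
  · rw [← sin_pi_sub y]
    exact sin_le_sin_of_le_of_le_pi_div_two (by linarith [pi_pos]) (by linarith) (by linarith)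

lemma sqrt_div_mul_mem_Icc {k c p q ε : ℝ} (hk : 0 < k) (hc : 0 < c) (hp : 0 < p) (hq : 0 < q)
    (hε : ε ∈ Icc (k * (c / q) ^ 2) (k * (c / p) ^ 2)) : √(k / ε) * c ∈ Icc p q := by
  have hε0 : 0 < ε := lt_of_lt_of_le (by positivity) hε.1
  rw [mem_Icc, ← le_div_iff₀ hc, ← div_le_iff₀ hc, le_sqrt (by positivity) (by positivity),
    sqrt_le_left (by positivity), le_div_iff₀ hε0, div_le_iff₀ hε0]
  obtain ⟨h1, h2⟩ := hε
  constructor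
  · calc (p / c) ^ 2 * ε ≤ (p / c) ^ 2 * (k * (c / p) ^ 2) := by gcongr
      _ = k := by field_simp
  · calc k = (q / c) ^ 2 * (k * (c / q) ^ 2) := by field_simp
      _ ≤ (q / c) ^ 2 * ε := by gcongr

lemma abs_div_add_sub_div_le {x k ε : ℝ} (hx : 0 ≤ x) (hk : 0 < k) (hε : 0 ≤ ε) :
    |x / (k + ε) - x / k| ≤ x * ε / k ^ 2 := by
  have hkε : 0 < k + ε := by linarith
  have hle : x / (k + ε) ≤ x / k := div_le_div_of_nonneg_left hx hk (by linarith)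
  rw [abs_sub_comm, abs_of_nonneg (sub_nonneg.mpr hle), div_sub_div _ _ hk.ne' hkε.ne',
    div_le_div_iff₀ (by positivity) (by positivity)]
  nlinarith [mul_nonneg (mul_nonneg hx hε) (mul_nonneg hk.le hε)]

lemma abs_yExp_sub_le {a b k ε s : ℝ} (hk : 0 < k) (hε : 0 < ε) (hs : 0 < s)
    (hsin : s ≤ |sin (√(k / ε) * (b - a))|) (t : ℝ) :
    |yExp a b k ε t - exp t / (k + ε)| ≤ (exp a + exp b) / ((k + ε) * s) * √(ε / k) := by
  set ω := √(k / ε)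
  have hω : 0 < ω := sqrt_pos.mpr (by positivity)
  have hnum : |-exp a * cos (ω * (b - t)) + exp b * cos (ω * (t - a))| ≤ exp a + exp b := by
    calc |-exp a * cos (ω * (b - t)) + exp b * cos (ω * (t - a))|
        ≤ exp a * |cos (ω * (b - t))| + exp b * |cos (ω * (t - a))| := by
          refine (abs_add_le _ _).trans_eq ?_
          rw [abs_mul, abs_mul, abs_neg, abs_of_pos (exp_pos a), abs_of_pos (exp_pos b)]
      _ ≤ exp a * 1 + exp b * 1 := by gcongr <;> exact abs_cos_le_one _
      _ = exp a + exp b := by ring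
  have hden : ω * (k + ε) * s ≤ |ω * (k + ε) * sin (ω * (b - a))| := by
    rw [abs_mul, abs_of_pos (by positivity : 0 < ω * (k + ε))]
    gcongr
  have hinv : √(ε / k) = ω⁻¹ := by rw [← sqrt_inv, inv_div]
  calc |yExp a b k ε t - exp t / (k + ε)|
      = |-exp a * cos (ω * (b - t)) + exp b * cos (ω * (t - a))| /
          |ω * (k + ε) * sin (ω * (b - a))| := by rw [yExp, add_sub_cancel_right, abs_div]
    _ ≤ (exp a + exp b) / (ω * (k + ε) * s) := div_le_div₀ (by positivity) hnum (by positivity) hden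
    _ = (exp a + exp b) / ((k + ε) * s) * √(ε / k) := by rw [hinv]; field_simp

-- The paper's `Jₙ`: for `ε` in it, `√(k/ε)(b-a)` stays `λ` away from the multiples of `π`.
def nonresonantInterval (a b k lam : ℝ) (n : ℕ) : Set ℝ :=
  Icc (k * ((b - a) / ((n + 1) * π - lam)) ^ 2) (k * ((b - a) / (n * π + lam)) ^ 2)

section nonresonantInterval

variable {a b k lam ε : ℝ} {n : ℕ}

lemma pos_of_mem_nonresonantInterval (hab : a < b) (hk : 0 < k) (hlam' : lam ≤ π / 2)
    (hε : ε ∈ nonresonantInterval a b k lam n) : 0 < ε := by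
  have : 0 < (n + 1) * π - lam := by nlinarith [pi_pos, (n.cast_nonneg : (0 : ℝ) ≤ n)]
  exact lt_of_lt_of_le (by have := sub_pos.mpr hab; positivity) hε.1

lemma sin_le_abs_sin_of_mem_nonresonantInterval (hab : a < b) (hk : 0 < k) (hlam : 0 < lam)
    (hlam' : lam ≤ π / 2) (hε : ε ∈ nonresonantInterval a b k lam n) :
    sin lam ≤ |sin (√(k / ε) * (b - a))| := by
  have hn : (0 : ℝ) ≤ n := n.cast_nonneg
  refine sin_le_abs_sin_of_mem_Icc n hlam.le ?_
  exact_mod_cast sqrt_div_mul_mem_Icc hk (sub_pos.mpr hab) (by nlinarith [pi_pos])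
    (by nlinarith [pi_pos]) hε

lemma abs_yExp_sub_le_of_mem_nonresonantInterval (hab : a < b) (hk : 0 < k) (hlam : 0 < lam)
    (hlam' : lam ≤ π / 2) (hε : ε ∈ nonresonantInterval a b k lam n) (t : ℝ) :
    |yExp a b k ε t - exp t / (k + ε)| ≤ (exp a + exp b) / ((k + ε) * sin lam) * √(ε / k) :=
  abs_yExp_sub_le hk (pos_of_mem_nonresonantInterval hab hk hlam' hε)
    (sin_pos_of_pos_of_lt_pi hlam (by linarith [pi_pos]))
    (sin_le_abs_sin_of_mem_nonresonantInterval hab hk hlam hlam' hε) t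

lemma abs_yExp_sub_exp_div_le (hab : a < b) (hk : 0 < k) (hlam : 0 < lam)
    (hlam' : lam ≤ π / 2) (hε : ε ∈ nonresonantInterval a b k lam n) {t : ℝ} (ht : t ≤ b) :
    |yExp a b k ε t - exp t / k| ≤
      (exp a + exp b) / (k * sin lam) * √(ε / k) + exp b * ε / k ^ 2 := by
  have hε0 := pos_of_mem_nonresonantInterval hab hk hlam' hε
  have hsin := sin_pos_of_pos_of_lt_pi hlam (by linarith [pi_pos])
  calc |yExp a b k ε t - exp t / k|
      ≤ |yExp a b k ε t - exp t / (k + ε)| + |exp t / (k + ε) - exp t / k| := abs_sub_le _ _ _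
    _ ≤ (exp a + exp b) / ((k + ε) * sin lam) * √(ε / k) + exp t * ε / k ^ 2 :=
        add_le_add (abs_yExp_sub_le_of_mem_nonresonantInterval hab hk hlam hlam' hε t)
          (abs_div_add_sub_div_le (exp_pos t).le hk hε0.le)
    _ ≤ (exp a + exp b) / (k * sin lam) * √(ε / k) + exp b * ε / k ^ 2 := by
        gcongr
        linarith

end nonresonantInterval

lemma tendsto_zero_of_forall_mem_nonresonantInterval {a b k lam : ℝ} {ε : ℕ → ℝ} (hab : a < b)
    (hk : 0 < k) (hlam' : lam ≤ π / 2) (hε : ∀ n, ε n ∈ nonresonantInterval a b k lam n) :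
    Tendsto ε atTop (𝓝 0) := by
  have hden : Tendsto (fun n : ℕ => (n : ℝ) * π + lam) atTop atTop :=
    tendsto_atTop_add_const_right _ _ (tendsto_natCast_atTop_atTop.atTop_mul_const pi_pos)
  have hub : Tendsto (fun n : ℕ => k * ((b - a) / (n * π + lam)) ^ 2) atTop (𝓝 0) := by
    simpa using ((tendsto_const_nhds.div_atTop hden).pow 2).const_mul k
  exact squeeze_zero (fun n => (pos_of_mem_nonresonantInterval hab hk hlam' (hε n)).le)
    (fun n => (hε n).2) hub

/-- for `ε ∈ Jₙ`, the solution `yExp` of the Neumann problem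
`ε y'' + k y = eᵗ`, `y'(a) = y'(b) = 0` satisfies for all `t ∈ [a,b]`
`|y_ε(t) - eᵗ/(k+ε)| ≤ ((eᵃ + eᵇ)/((k+ε) sin λ)) √(ε/k)`; in particular, for `εₙ ∈ Jₙ`
the solutions `y_{εₙ}` converge uniformly on `[a,b]` to `u(t) = eᵗ/k` as `n → ∞`. -/
theorem stmt_15 (a b k lam : ℝ) (hab : a < b) (hk : 0 < k)
    (hlam : 0 < lam) (hlam' : lam ≤ π / 2) :
    (∀ (n : ℕ) (ε : ℝ),
      ε ∈ Icc (k * ((b - a) / ((n + 1) * π - lam)) ^ 2)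
        (k * ((b - a) / (n * π + lam)) ^ 2) →
      ∀ t ∈ Icc a b,
        |yExp a b k ε t - Real.exp t / (k + ε)| ≤
          (Real.exp a + Real.exp b) / ((k + ε) * Real.sin lam) * Real.sqrt (ε / k)) ∧
    (∀ ε : ℕ → ℝ,
      (∀ n : ℕ, ε n ∈ Icc (k * ((b - a) / ((n + 1) * π - lam)) ^ 2)
        (k * ((b - a) / (n * π + lam)) ^ 2)) →
      TendstoUniformlyOn (fun n t => yExp a b k (ε n) t)
        (fun t => Real.exp t / k) Filter.atTop (Icc a b)) := by
  refine ⟨fun n ε hε t _ => abs_yExp_sub_le_of_mem_nonresonantInterval hab hk hlam hlam' hε t,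
    fun ε hε => ?_⟩
  have hε0 := tendsto_zero_of_forall_mem_nonresonantInterval hab hk hlam' hε
  refine tendstoUniformlyOn_of_dist_le (g := fun n =>
      (exp a + exp b) / (k * sin lam) * √(ε n / k) + exp b * ε n / k ^ 2) ?_ fun n t ht => ?_
  · simpa using
      ((hε0.div_const k).sqrt.const_mul _).add ((hε0.const_mul (exp b)).div_const (k ^ 2))
  · rw [dist_comm, dist_eq]
    exact abs_yExp_sub_exp_div_le hab hk hlam hlam' (hε n) ht.2
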